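/- In the continuous playroom abstraction: if the 'temperature' fluent is only modified by actions, never appears in any precondition or the goal, and no effect function of any other fluent depends on it, then every optimal plan of the reduced problem (with temperature deleted) lifts to an optimal plan of the original problem of equal cost. -/
import Mathlib


abbrev PState (𝒥 : Type*) (S : 𝒥 → Type*) := (j : 𝒥) → S j

/-- A CAE triple with state-dependent effects (so that "the effect on one fluent may
depend on another fluent" is expressible). -/
structure CAE (𝒥 : Type*) (S : 𝒥 → Type*) where
  pre : PState 𝒥 S → Prop
  eff : PState 𝒥 S → PState 𝒥 S

variable {𝒥 : Type*} {S : 𝒥 → Type*}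

/-- Two states agree on every fluent except possibly `t`. -/
def AgreeOff (t : 𝒥) (s s' : PState 𝒥 S) : Prop := ∀ j, j ≠ t → s j = s' j

/-- Run a sequence of CAE triples from a state. -/
def runTrace (s : PState 𝒥 S) : List (CAE 𝒥 S) → PState 𝒥 S
  | [] => s
  | x :: xs => runTrace (x.eff s) xs

/-- A sequence of CAE triples is applicable (executable) from a state. -/
def Exec (s : PState 𝒥 S) : List (CAE 𝒥 S) → Prop
  | [] => True
  | x :: xs => x.pre s ∧ Exec (x.eff s) xs

/-- States of the problem with fluent `t` deleted. -/
abbrev RState (t : 𝒥) (S : 𝒥 → Type*) := (k : {j : 𝒥 // j ≠ t}) → S k.1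

/-- Restrict a state to the fluents other than `t`. -/
def restrictOff (t : 𝒥) (s : PState 𝒥 S) : RState t S := fun k => s k.1

open Classical in
/-- Extend a reduced state to a full state, using `d` as the value of `t`. -/
noncomputable def extendWith (t : 𝒥) (d : S t) (a : RState t S) : PState 𝒥 S := fun j =>
  if h : j = t then cast (congrArg S h).symm d else a ⟨j, h⟩

/-- Run a sequence of (projected) CAE triples in the reduced problem. -/
noncomputable def runTraceR (t : 𝒥) (d : S t) (a : RState t S) : List (CAE 𝒥 S) → RState t S
  | [] => a
  | x :: xs => runTraceR t d (restrictOff t (x.eff (extendWith t d a))) xs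

/-- Executability of a sequence of (projected) CAE triples in the reduced problem. -/
def ExecR (t : 𝒥) (d : S t) (a : RState t S) : List (CAE 𝒥 S) → Prop
  | [] => True
  | x :: xs => x.pre (extendWith t d a) ∧
      ExecR t d (restrictOff t (x.eff (extendWith t d a))) xs

variable (T : Set (CAE 𝒥 S)) (s0 : PState 𝒥 S) (G : PState 𝒥 S → Prop)

/-- A valid plan of the original problem: actions from `T`, applicable from `s0`,
with the final state satisfying `G`. -/
def ValidPlan (xs : List (CAE 𝒥 S)) : Prop :=
  (∀ x ∈ xs, x ∈ T) ∧ Exec s0 xs ∧ G (runTrace s0 xs)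

/-- A valid plan of the reduced problem (with fluent `t` deleted). -/
def ValidPlanR (t : 𝒥) (xs : List (CAE 𝒥 S)) : Prop :=
  (∀ x ∈ xs, x ∈ T) ∧ ExecR t (s0 t) (restrictOff t s0) xs ∧
    G (extendWith t (s0 t) (runTraceR t (s0 t) (restrictOff t s0) xs))

lemma agreeOff_trans {t : 𝒥} {a b c : PState 𝒥 S}
    (h1 : AgreeOff t a b) (h2 : AgreeOff t b c) : AgreeOff t a c :=
  fun j hj => (h1 j hj).trans (h2 j hj)

lemma agreeOff_extend_restrict (t : 𝒥) (d : S t) (s : PState 𝒥 S) :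
    AgreeOff t s (extendWith t d (restrictOff t s)) := by
  intro j hj
  simp [extendWith, restrictOff, hj]

lemma exec_run_reduced (t : 𝒥)
    (hpre : ∀ x ∈ T, ∀ s s', AgreeOff t s s' → (x.pre s ↔ x.pre s'))
    (heff : ∀ x ∈ T, ∀ s s', AgreeOff t s s' → AgreeOff t (x.eff s) (x.eff s')) :
    ∀ (xs : List (CAE 𝒥 S)), (∀ x ∈ xs, x ∈ T) →
      ∀ (s : PState 𝒥 S) (d : S t) (a : RState t S), AgreeOff t s (extendWith t d a) →
      (Exec s xs ↔ ExecR t d a xs) ∧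
        AgreeOff t (runTrace s xs) (extendWith t d (runTraceR t d a xs)) := by
  intro xs
  induction xs with
  | nil => intro _ s d a h; exact ⟨Iff.rfl, h⟩
  | cons x xs ih =>
    intro hmem s d a h
    have hxT : x ∈ T := hmem x (by simp)
    have hagree' : AgreeOff t (x.eff s) (x.eff (extendWith t d a)) :=
      heff x hxT s (extendWith t d a) h
    have hagree : AgreeOff t (x.eff s)
        (extendWith t d (restrictOff t (x.eff (extendWith t d a)))) :=
      agreeOff_trans hagree'
        (agreeOff_extend_restrict t d (x.eff (extendWith t d a)))
    have hih := ih (fun y hy => hmem y (by simp [hy])) (x.eff s) d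
      (restrictOff t (x.eff (extendWith t d a))) hagree
    constructor
    · show (x.pre s ∧ _) ↔ (x.pre (extendWith t d a) ∧ _)
      exact and_congr (hpre x hxT s (extendWith t d a) h) hih.1
    · exact hih.2

theorem validPlan_iff_validPlanR (t : 𝒥)
    (hG : ∀ s s', AgreeOff t s s' → (G s ↔ G s'))
    (hpre : ∀ x ∈ T, ∀ s s', AgreeOff t s s' → (x.pre s ↔ x.pre s'))
    (heff : ∀ x ∈ T, ∀ s s', AgreeOff t s s' → AgreeOff t (x.eff s) (x.eff s'))
    (xs : List (CAE 𝒥 S)) :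
    ValidPlan T s0 G xs ↔ ValidPlanR T s0 G t xs := by
  constructor
  · rintro ⟨hmem, hexec, hgoal⟩
    have h := exec_run_reduced T t hpre heff xs hmem s0 (s0 t) (restrictOff t s0)
      (agreeOff_extend_restrict t (s0 t) s0)
    exact ⟨hmem, h.1.mp hexec, (hG _ _ h.2).mp hgoal⟩
  · rintro ⟨hmem, hexec, hgoal⟩
    have h := exec_run_reduced T t hpre heff xs hmem s0 (s0 t) (restrictOff t s0)
      (agreeOff_extend_restrict t (s0 t) s0)
    exact ⟨hmem, h.1.mpr hexec, (hG _ _ h.2).mpr hgoal⟩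

/-- If the temperature fluent `t` never appears in any precondition or the goal, and no
effect on any other fluent depends on it, then every optimal plan of the reduced problem
(with `t` deleted) is an optimal plan of the original problem of equal cost. -/
theorem optimal_plan_lifts_from_temperature_reduction
    (t : 𝒥) (cost : CAE 𝒥 S → ℝ) (hcost : ∀ x, 0 ≤ cost x)
    (hG : ∀ s s', AgreeOff t s s' → (G s ↔ G s'))
    (hpre : ∀ x ∈ T, ∀ s s', AgreeOff t s s' → (x.pre s ↔ x.pre s'))
    (heff : ∀ x ∈ T, ∀ s s', AgreeOff t s s' → AgreeOff t (x.eff s) (x.eff s'))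
    (xs : List (CAE 𝒥 S))
    (hopt : ValidPlanR T s0 G t xs ∧
      ∀ ys, ValidPlanR T s0 G t ys → (xs.map cost).sum ≤ (ys.map cost).sum) :
    (ValidPlan T s0 G xs ∧
      ∀ ys, ValidPlan T s0 G ys → (xs.map cost).sum ≤ (ys.map cost).sum) ∧
    (xs.map cost).sum = (xs.map cost).sum := by
  refine ⟨⟨(validPlan_iff_validPlanR T s0 G t hG hpre heff xs).mpr hopt.1, ?_⟩, rfl⟩
  intro ys hys
  exact hopt.2 ys ((validPlan_iff_validPlanR T s0 G t hG hpre heff ys).mp hys)
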